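/- Let c₁,…,c₆ ∈ ℝ with Δ := c₁c₄ − c₂c₃ ≠ 0, let W⁰, W¹ : ℝ → ℝ be smooth, let Ω ⊆ {(z₁,z₂) ∈ ℝ² : c₃z₁ + c₄ ≠ 0} be open, and let w : Ω → ℝ be a smooth solution of the reduced equation. Define Φ(z₁,z₂) := ((c₁z₁+c₂)/(c₃z₁+c₄), (z₂+c₅z₁+c₆)/(c₃z₁+c₄)). Then Φ is injective on Ω, Φ(Ω) is open, and the function v : Φ(Ω) → ℝ determined by v(Φ(z₁,z₂)) = w(z₁,z₂)/(Δ(c₃z₁+c₄)) − c₃z₂³/(6Δ(c₃z₁+c₄)²) − (c₃c₆ − c₄c₅)z₂²/(2Δ(c₃z₁+c₄)²) + W¹(z₁)z₂ + W⁰(z₁) is a smooth solution of the reduced equation on Φ(Ω). (This is the verification part of the theorem describing the point-symmetry pseudogroup of the reduced equation.) -/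

import Mathlib

/-!
`Φ` has an explicit inverse `ψ` on `{c₁ ≠ c₃q₁}`, so `Φ(Ω) = {c₁ ≠ c₃q₁} ∩ ψ⁻¹(Ω)` is open and
`v = g ∘ ψ` there, `g` being the right-hand side of the identity defining `v`.
The reduced equation says that `h = ∂₂²w` solves the inviscid Burgers equation
`∂₁h + h ∂₂h = 0`. Since `ψ` is affine in `q₂` with slope `Δ/(c₁ - c₃q₁)`, one finds
`∂₂²v = h̃` with `h̃(q) = (h(ψ q) - c₃q₂ + c₅)/(c₁ - c₃q₁)`, and the chain rule gives
`∂₁h̃ + h̃ ∂₂h̃ = Δ/(c₁ - c₃q₁)³ · (∂₁h + h ∂₂h) ∘ ψ`.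
-/

/-- First-coordinate partial derivative of a function on `ℝ²`. -/
noncomputable def d1 (f : ℝ × ℝ → ℝ) (p : ℝ × ℝ) : ℝ := deriv (fun s => f (s, p.2)) p.1

/-- Second-coordinate partial derivative of a function on `ℝ²`. -/
noncomputable def d2 (f : ℝ × ℝ → ℝ) (p : ℝ × ℝ) : ℝ := deriv (fun s => f (p.1, s)) p.2

/-- `w` is a smooth solution of the reduced equation `∂₁∂₂²w + (∂₂²w)·(∂₂³w) = 0` on `U`. -/
def IsRedSolOn (w : ℝ × ℝ → ℝ) (U : Set (ℝ × ℝ)) : Prop :=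
  ContDiffOn ℝ (⊤ : ℕ∞) w U ∧
    ∀ p ∈ U, d1 (d2 (d2 w)) p + d2 (d2 w) p * d2 (d2 (d2 w)) p = 0

/-- `h` is a smooth solution of the inviscid Burgers equation `∂₁h + h·∂₂h = 0` on `U`. -/
def IsBurgersSolOn (h : ℝ × ℝ → ℝ) (U : Set (ℝ × ℝ)) : Prop :=
  ContDiffOn ℝ (⊤ : ℕ∞) h U ∧ ∀ p ∈ U, d1 h p + h p * d2 h p = 0

open Filter Set Topology

section Partials

variable {f g : ℝ × ℝ → ℝ} {U : Set (ℝ × ℝ)} {p : ℝ × ℝ}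

lemma d1_eq_fderiv (hf : DifferentiableAt ℝ f p) : d1 f p = fderiv ℝ f p (1, 0) :=
  (hf.hasFDerivAt.comp_hasDerivAt p.1 ((hasDerivAt_id _).prodMk (hasDerivAt_const _ _))).deriv

lemma d2_eq_fderiv (hf : DifferentiableAt ℝ f p) : d2 f p = fderiv ℝ f p (0, 1) :=
  (hf.hasFDerivAt.comp_hasDerivAt p.2 ((hasDerivAt_const _ _).prodMk (hasDerivAt_id _))).deriv

lemma fderiv_apply_eq_d1_d2 (hf : DifferentiableAt ℝ f p) (u v : ℝ) :
    fderiv ℝ f p (u, v) = u * d1 f p + v * d2 f p := by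
  have huv : ((u, v) : ℝ × ℝ) = u • ((1 : ℝ), (0 : ℝ)) + v • ((0 : ℝ), (1 : ℝ)) := by simp
  rw [huv, map_add, map_smul, map_smul, d1_eq_fderiv hf, d2_eq_fderiv hf, smul_eq_mul,
    smul_eq_mul]

lemma hasDerivAt_comp_curve {γ : ℝ → ℝ × ℝ} {x u v : ℝ} (hγ : HasDerivAt γ (u, v) x)
    (hf : DifferentiableAt ℝ f (γ x)) :
    HasDerivAt (f ∘ γ) (u * d1 f (γ x) + v * d2 f (γ x)) x := by
  simpa only [fderiv_apply_eq_d1_d2 hf] using hf.hasFDerivAt.comp_hasDerivAt x hγ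

lemma DifferentiableAt.snd_slice (hf : DifferentiableAt ℝ f p) :
    DifferentiableAt ℝ (fun s => f (p.1, s)) p.2 :=
  hf.comp p.2 ((differentiableAt_const _).prodMk differentiableAt_id)

lemma d2_fst_mul (c : ℝ → ℝ) (f : ℝ × ℝ → ℝ) (p : ℝ × ℝ) :
    d2 (fun q => c q.1 * f q) p = c p.1 * d2 f p :=
  congrFun (deriv_const_mul_field' (c p.1)) p.2

lemma eventually_fst_slice_mem (hU : U ∈ 𝓝 p) : ∀ᶠ s in 𝓝 p.1, (s, p.2) ∈ U :=
  (continuous_id.prodMk continuous_const).continuousAt.preimage_mem_nhds hU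

lemma eventually_snd_slice_mem (hU : U ∈ 𝓝 p) : ∀ᶠ s in 𝓝 p.2, (p.1, s) ∈ U :=
  (continuous_const.prodMk continuous_id).continuousAt.preimage_mem_nhds hU

lemma d1_congr (hU : IsOpen U) (h : EqOn f g U) (hp : p ∈ U) : d1 f p = d1 g p :=
  EventuallyEq.deriv_eq <| (eventually_fst_slice_mem (hU.mem_nhds hp)).mono fun _ hs => h hs

lemma d2_congr (hU : IsOpen U) (h : EqOn f g U) (hp : p ∈ U) : d2 f p = d2 g p :=
  EventuallyEq.deriv_eq <| (eventually_snd_slice_mem (hU.mem_nhds hp)).mono fun _ hs => h hs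

lemma ContDiffOn.differentiableAt_of_isOpen (hU : IsOpen U) (hf : ContDiffOn ℝ (⊤ : ℕ∞) f U)
    (hp : p ∈ U) : DifferentiableAt ℝ f p :=
  (hf.contDiffAt (hU.mem_nhds hp)).differentiableAt (by simp)

lemma ContDiffOn.d2 (hU : IsOpen U) (hf : ContDiffOn ℝ (⊤ : ℕ∞) f U) :
    ContDiffOn ℝ (⊤ : ℕ∞) (d2 f) U :=
  ((hf.fderiv_of_isOpen hU (by exact_mod_cast le_top)).clm_apply contDiffOn_const).congr
    fun _ hp => d2_eq_fderiv (hf.differentiableAt_of_isOpen hU hp)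

lemma IsRedSolOn.of_eqOn_d2_d2 {v h : ℝ × ℝ → ℝ} (hU : IsOpen U)
    (hv : ContDiffOn ℝ (⊤ : ℕ∞) v U) (hh : ∀ q ∈ U, d1 h q + h q * d2 h q = 0)
    (heq : EqOn (d2 (d2 v)) h U) : IsRedSolOn v U :=
  ⟨hv, fun q hq => by rw [d1_congr hU heq hq, heq hq, d2_congr hU heq hq]; exact hh q hq⟩

end Partials

lemma deriv_deriv_div_add_cubic {f : ℝ → ℝ} {x : ℝ} (a b c l m : ℝ)
    (hf : ∀ᶠ s in 𝓝 x, DifferentiableAt ℝ f s) (hf' : DifferentiableAt ℝ (deriv f) x) :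
    deriv (deriv fun s => f s / a - b * (s ^ 3 / 6) - c * (s ^ 2 / 2) + l * s + m) x
      = deriv (deriv f) x / a - b * x - c := by
  have hderiv : deriv (fun s => f s / a - b * (s ^ 3 / 6) - c * (s ^ 2 / 2) + l * s + m)
      =ᶠ[𝓝 x] fun s => deriv f s / a - b * (s ^ 2 / 2) - c * s + l := by
    filter_upwards [hf] with s hs
    have h := ((((hs.hasDerivAt.div_const a).fun_sub
      (((hasDerivAt_pow 3 s).div_const 6).const_mul b)).fun_sub
      (((hasDerivAt_pow 2 s).div_const 2).const_mul c)).fun_add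
      ((hasDerivAt_id' s).const_mul l)).add_const m
    rw [h.deriv]; push_cast; ring
  have h := (((hf'.hasDerivAt.div_const a).fun_sub
    (((hasDerivAt_pow 2 x).div_const 2).const_mul b)).fun_sub
    ((hasDerivAt_id' x).const_mul c)).add_const l
  rw [hderiv.deriv_eq, h.deriv]; push_cast; ring

section PointMap

variable {c₁ c₂ c₃ c₄ c₅ c₆ x : ℝ} {p q : ℝ × ℝ}

noncomputable def symMap (c₁ c₂ c₃ c₄ c₅ c₆ : ℝ) (p : ℝ × ℝ) : ℝ × ℝ :=
  ((c₁ * p.1 + c₂) / (c₃ * p.1 + c₄), (p.2 + c₅ * p.1 + c₆) / (c₃ * p.1 + c₄))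

noncomputable def symMapInv (c₁ c₂ c₃ c₄ c₅ c₆ : ℝ) (q : ℝ × ℝ) : ℝ × ℝ :=
  ((c₄ * q.1 - c₂) / (c₁ - c₃ * q.1),
    (c₁ * c₄ - c₂ * c₃) / (c₁ - c₃ * q.1) * q.2 - c₅ * ((c₄ * q.1 - c₂) / (c₁ - c₃ * q.1)) - c₆)

lemma sub_mul_symMap_fst (hD : c₃ * p.1 + c₄ ≠ 0) :
    c₁ - c₃ * (symMap c₁ c₂ c₃ c₄ c₅ c₆ p).1 = (c₁ * c₄ - c₂ * c₃) / (c₃ * p.1 + c₄) := by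
  rw [symMap, eq_div_iff hD]; field_simp; ring

lemma mul_symMapInv_fst_add (hE : c₁ - c₃ * q.1 ≠ 0) :
    c₃ * (symMapInv c₁ c₂ c₃ c₄ c₅ c₆ q).1 + c₄ = (c₁ * c₄ - c₂ * c₃) / (c₁ - c₃ * q.1) := by
  rw [symMapInv, eq_div_iff hE]; field_simp; ring

lemma symMapInv_symMap (hΔ : c₁ * c₄ - c₂ * c₃ ≠ 0) (hD : c₃ * p.1 + c₄ ≠ 0) :
    symMapInv c₁ c₂ c₃ c₄ c₅ c₆ (symMap c₁ c₂ c₃ c₄ c₅ c₆ p) = p := by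
  have hnum : c₄ * (symMap c₁ c₂ c₃ c₄ c₅ c₆ p).1 - c₂
      = (c₁ * c₄ - c₂ * c₃) * p.1 / (c₃ * p.1 + c₄) := by
    rw [symMap, mul_div_assoc', div_sub' hD, div_left_inj' hD]; ring
  rw [symMapInv, sub_mul_symMap_fst hD, hnum, symMap]
  ext
  · field_simp
  · field_simp; ring

lemma symMap_symMapInv (hΔ : c₁ * c₄ - c₂ * c₃ ≠ 0) (hE : c₁ - c₃ * q.1 ≠ 0) :
    symMap c₁ c₂ c₃ c₄ c₅ c₆ (symMapInv c₁ c₂ c₃ c₄ c₅ c₆ q) = q := by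
  have hnum : c₁ * (symMapInv c₁ c₂ c₃ c₄ c₅ c₆ q).1 + c₂
      = (c₁ * c₄ - c₂ * c₃) * q.1 / (c₁ - c₃ * q.1) := by
    rw [symMapInv, mul_div_assoc', div_add' _ _ _ hE, div_left_inj' hE]; ring
  rw [symMap, mul_symMapInv_fst_add hE, hnum, symMapInv]
  ext
  · field_simp
  · field_simp; ring

lemma image_symMap {Ω : Set (ℝ × ℝ)} (hΔ : c₁ * c₄ - c₂ * c₃ ≠ 0)
    (hΩden : ∀ p ∈ Ω, c₃ * p.1 + c₄ ≠ 0) :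
    symMap c₁ c₂ c₃ c₄ c₅ c₆ '' Ω
      = {q | c₁ - c₃ * q.1 ≠ 0} ∩ symMapInv c₁ c₂ c₃ c₄ c₅ c₆ ⁻¹' Ω := by
  ext q
  constructor
  · rintro ⟨p, hp, rfl⟩
    refine ⟨?_, by simpa [symMapInv_symMap hΔ (hΩden p hp)] using hp⟩
    rw [mem_ofPred_eq, sub_mul_symMap_fst (hΩden p hp)]
    exact div_ne_zero hΔ (hΩden p hp)
  · rintro ⟨hE, hq⟩
    exact ⟨_, hq, symMap_symMapInv hΔ hE⟩

lemma contDiffOn_symMapInv :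
    ContDiffOn ℝ (⊤ : ℕ∞) (symMapInv c₁ c₂ c₃ c₄ c₅ c₆) {q | c₁ - c₃ * q.1 ≠ 0} := by
  unfold symMapInv
  fun_prop (disch := exact fun _ hq => hq)

lemma isOpen_image_symMap {Ω : Set (ℝ × ℝ)} (hΔ : c₁ * c₄ - c₂ * c₃ ≠ 0) (hΩ : IsOpen Ω)
    (hΩden : ∀ p ∈ Ω, c₃ * p.1 + c₄ ≠ 0) : IsOpen (symMap c₁ c₂ c₃ c₄ c₅ c₆ '' Ω) := by
  rw [image_symMap hΔ hΩden]
  exact contDiffOn_symMapInv.continuousOn.isOpen_inter_preimage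
    (isOpen_ne_fun (by fun_prop) continuous_const) hΩ

lemma hasDerivAt_symMapInv_fst (hE : c₁ - c₃ * x ≠ 0) (y : ℝ) :
    HasDerivAt (fun s => symMapInv c₁ c₂ c₃ c₄ c₅ c₆ (s, y))
      ((c₁ * c₄ - c₂ * c₃) / (c₁ - c₃ * x) ^ 2,
        (c₁ * c₄ - c₂ * c₃) * (c₃ * y - c₅) / (c₁ - c₃ * x) ^ 2) x := by
  have hden : HasDerivAt (fun s => c₁ - c₃ * s) (-c₃) x := by
    simpa using ((hasDerivAt_id' x).const_mul c₃).const_sub c₁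
  have hfst := (((hasDerivAt_id' x).const_mul c₄).sub_const c₂).div hden hE
  have hscale := (hasDerivAt_const x (c₁ * c₄ - c₂ * c₃)).div hden hE
  refine (hfst.prodMk (((hscale.mul_const y).sub (hfst.const_mul c₅)).sub_const c₆)).congr_deriv ?_
  ext <;> (dsimp only; field_simp; ring)

lemma hasDerivAt_symMapInv_snd (x y : ℝ) :
    HasDerivAt (fun s => symMapInv c₁ c₂ c₃ c₄ c₅ c₆ (x, s))
      (0, (c₁ * c₄ - c₂ * c₃) / (c₁ - c₃ * x)) y := by
  simp only [symMapInv]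
  refine ((hasDerivAt_const y _).prodMk ((((hasDerivAt_id' y).const_mul
    ((c₁ * c₄ - c₂ * c₃) / (c₁ - c₃ * x))).sub_const _).sub_const _)).congr_deriv ?_
  simp

end PointMap

section Burgers

variable {c₁ c₂ c₃ c₄ c₅ c₆ : ℝ} {h : ℝ × ℝ → ℝ} {Ω : Set (ℝ × ℝ)} {q : ℝ × ℝ}

noncomputable def burgersTransform (c₁ c₂ c₃ c₄ c₅ c₆ : ℝ) (h : ℝ × ℝ → ℝ) (q : ℝ × ℝ) : ℝ :=
  (h (symMapInv c₁ c₂ c₃ c₄ c₅ c₆ q) - c₃ * q.2 + c₅) / (c₁ - c₃ * q.1)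

lemma d1_add_mul_d2_burgersTransform (hE : c₁ - c₃ * q.1 ≠ 0)
    (hh : DifferentiableAt ℝ h (symMapInv c₁ c₂ c₃ c₄ c₅ c₆ q)) :
    d1 (burgersTransform c₁ c₂ c₃ c₄ c₅ c₆ h) q
        + burgersTransform c₁ c₂ c₃ c₄ c₅ c₆ h q * d2 (burgersTransform c₁ c₂ c₃ c₄ c₅ c₆ h) q
      = (c₁ * c₄ - c₂ * c₃) / (c₁ - c₃ * q.1) ^ 3
        * (d1 h (symMapInv c₁ c₂ c₃ c₄ c₅ c₆ q)
          + h (symMapInv c₁ c₂ c₃ c₄ c₅ c₆ q) * d2 h (symMapInv c₁ c₂ c₃ c₄ c₅ c₆ q)) := by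
  have hden : HasDerivAt (fun s => c₁ - c₃ * s) (-c₃) q.1 := by
    simpa using ((hasDerivAt_id' q.1).const_mul c₃).const_sub c₁
  have h1 := (((hasDerivAt_comp_curve (hasDerivAt_symMapInv_fst hE q.2) hh).sub_const
    (c₃ * q.2)).add_const c₅).div hden hE
  have h2 := (((hasDerivAt_comp_curve (hasDerivAt_symMapInv_snd q.1 q.2) hh).fun_sub
    ((hasDerivAt_id' q.2).const_mul c₃)).add_const c₅).div_const (c₁ - c₃ * q.1)
  have hd1 : d1 (burgersTransform c₁ c₂ c₃ c₄ c₅ c₆ h) q = _ := h1.deriv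
  have hd2 : d2 (burgersTransform c₁ c₂ c₃ c₄ c₅ c₆ h) q = _ := h2.deriv
  rw [hd1, hd2, burgersTransform]
  simp only [Function.comp_apply]
  field_simp
  ring

lemma d1_add_mul_d2_burgersTransform_eq_zero (hΔ : c₁ * c₄ - c₂ * c₃ ≠ 0) (hΩ : IsOpen Ω)
    (hΩden : ∀ p ∈ Ω, c₃ * p.1 + c₄ ≠ 0) (hh : DifferentiableOn ℝ h Ω)
    (hburgers : ∀ p ∈ Ω, d1 h p + h p * d2 h p = 0) :
    ∀ q ∈ symMap c₁ c₂ c₃ c₄ c₅ c₆ '' Ω,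
      d1 (burgersTransform c₁ c₂ c₃ c₄ c₅ c₆ h) q
        + burgersTransform c₁ c₂ c₃ c₄ c₅ c₆ h q * d2 (burgersTransform c₁ c₂ c₃ c₄ c₅ c₆ h) q
        = 0 := by
  intro q hq
  rw [image_symMap hΔ hΩden] at hq
  rw [d1_add_mul_d2_burgersTransform hq.1 (hh.differentiableAt (hΩ.mem_nhds hq.2)),
    hburgers _ hq.2, mul_zero]

end Burgers

section Pullback

variable {c₁ c₂ c₃ c₄ c₅ c₆ : ℝ} {W0 W1 : ℝ → ℝ} {f w v : ℝ × ℝ → ℝ} {Ω U V : Set (ℝ × ℝ)}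
  {p q : ℝ × ℝ}

noncomputable def symPullback (c₁ c₂ c₃ c₄ c₅ c₆ : ℝ) (W0 W1 : ℝ → ℝ) (w : ℝ × ℝ → ℝ)
    (p : ℝ × ℝ) : ℝ :=
  w p / ((c₁ * c₄ - c₂ * c₃) * (c₃ * p.1 + c₄))
    - c₃ / ((c₁ * c₄ - c₂ * c₃) * (c₃ * p.1 + c₄) ^ 2) * (p.2 ^ 3 / 6)
    - (c₃ * c₆ - c₄ * c₅) / ((c₁ * c₄ - c₂ * c₃) * (c₃ * p.1 + c₄) ^ 2) * (p.2 ^ 2 / 2)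
    + W1 p.1 * p.2 + W0 p.1

lemma contDiffOn_symPullback (hΔ : c₁ * c₄ - c₂ * c₃ ≠ 0) (hW0 : ContDiff ℝ (⊤ : ℕ∞) W0)
    (hW1 : ContDiff ℝ (⊤ : ℕ∞) W1) (hΩden : ∀ p ∈ Ω, c₃ * p.1 + c₄ ≠ 0)
    (hw : ContDiffOn ℝ (⊤ : ℕ∞) w Ω) :
    ContDiffOn ℝ (⊤ : ℕ∞) (symPullback c₁ c₂ c₃ c₄ c₅ c₆ W0 W1 w) Ω := by
  have hD : ∀ p ∈ Ω, (c₁ * c₄ - c₂ * c₃) * (c₃ * p.1 + c₄) ≠ 0 :=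
    fun p hp => mul_ne_zero hΔ (hΩden p hp)
  have hD2 : ∀ p ∈ Ω, (c₁ * c₄ - c₂ * c₃) * (c₃ * p.1 + c₄) ^ 2 ≠ 0 :=
    fun p hp => mul_ne_zero hΔ (pow_ne_zero 2 (hΩden p hp))
  unfold symPullback
  fun_prop (disch := assumption)

lemma d2_d2_symPullback (hΩ : IsOpen Ω) (hw : ContDiffOn ℝ (⊤ : ℕ∞) w Ω) (hp : p ∈ Ω) :
    d2 (d2 (symPullback c₁ c₂ c₃ c₄ c₅ c₆ W0 W1 w)) p
      = d2 (d2 w) p / ((c₁ * c₄ - c₂ * c₃) * (c₃ * p.1 + c₄))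
        - c₃ / ((c₁ * c₄ - c₂ * c₃) * (c₃ * p.1 + c₄) ^ 2) * p.2
        - (c₃ * c₆ - c₄ * c₅) / ((c₁ * c₄ - c₂ * c₃) * (c₃ * p.1 + c₄) ^ 2) := by
  have hdiff : ∀ᶠ s in 𝓝 p.2, DifferentiableAt ℝ (fun t => w (p.1, t)) s :=
    (eventually_snd_slice_mem (hΩ.mem_nhds hp)).mono fun s hs =>
      (hw.differentiableAt_of_isOpen hΩ hs).snd_slice
  have h := deriv_deriv_div_add_cubic ((c₁ * c₄ - c₂ * c₃) * (c₃ * p.1 + c₄))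
    (c₃ / ((c₁ * c₄ - c₂ * c₃) * (c₃ * p.1 + c₄) ^ 2))
    ((c₃ * c₆ - c₄ * c₅) / ((c₁ * c₄ - c₂ * c₃) * (c₃ * p.1 + c₄) ^ 2)) (W1 p.1) (W0 p.1) hdiff
    ((hw.d2 hΩ).differentiableAt_of_isOpen hΩ hp).snd_slice
  unfold d2
  exact h

lemma d2_comp_symMapInv (hf : DifferentiableAt ℝ f (symMapInv c₁ c₂ c₃ c₄ c₅ c₆ q)) :
    d2 (f ∘ symMapInv c₁ c₂ c₃ c₄ c₅ c₆) q
      = (c₁ * c₄ - c₂ * c₃) / (c₁ - c₃ * q.1) * d2 f (symMapInv c₁ c₂ c₃ c₄ c₅ c₆ q) := by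
  have h := hasDerivAt_comp_curve (hasDerivAt_symMapInv_snd q.1 q.2) hf
  rw [zero_mul, zero_add] at h
  exact h.deriv

lemma d2_d2_eq_of_eqOn_comp_symMapInv (hU : IsOpen U) (hV : IsOpen V)
    (hVU : MapsTo (symMapInv c₁ c₂ c₃ c₄ c₅ c₆) V U) (hf : ContDiffOn ℝ (⊤ : ℕ∞) f U)
    (hv : EqOn v (f ∘ symMapInv c₁ c₂ c₃ c₄ c₅ c₆) V) (hq : q ∈ V) :
    d2 (d2 v) q
      = ((c₁ * c₄ - c₂ * c₃) / (c₁ - c₃ * q.1)) ^ 2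
        * d2 (d2 f) (symMapInv c₁ c₂ c₃ c₄ c₅ c₆ q) := by
  have hd2v : EqOn (d2 v)
      (fun q => (c₁ * c₄ - c₂ * c₃) / (c₁ - c₃ * q.1) * (d2 f ∘ symMapInv c₁ c₂ c₃ c₄ c₅ c₆) q) V :=
    fun q hq => (d2_congr hV hv hq).trans
      (d2_comp_symMapInv (hf.differentiableAt_of_isOpen hU (hVU hq)))
  rw [d2_congr hV hd2v hq, d2_fst_mul (fun x => (c₁ * c₄ - c₂ * c₃) / (c₁ - c₃ * x)),
    d2_comp_symMapInv ((hf.d2 hU).differentiableAt_of_isOpen hU (hVU hq)), ← mul_assoc, sq]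

lemma eqOn_d2_d2_burgersTransform (hΔ : c₁ * c₄ - c₂ * c₃ ≠ 0) (hW0 : ContDiff ℝ (⊤ : ℕ∞) W0)
    (hW1 : ContDiff ℝ (⊤ : ℕ∞) W1) (hΩ : IsOpen Ω) (hΩden : ∀ p ∈ Ω, c₃ * p.1 + c₄ ≠ 0)
    (hw : ContDiffOn ℝ (⊤ : ℕ∞) w Ω)
    (hv : EqOn v (symPullback c₁ c₂ c₃ c₄ c₅ c₆ W0 W1 w ∘ symMapInv c₁ c₂ c₃ c₄ c₅ c₆)
      (symMap c₁ c₂ c₃ c₄ c₅ c₆ '' Ω)) :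
    EqOn (d2 (d2 v)) (burgersTransform c₁ c₂ c₃ c₄ c₅ c₆ (d2 (d2 w)))
      (symMap c₁ c₂ c₃ c₄ c₅ c₆ '' Ω) := by
  intro q hq
  have hV := isOpen_image_symMap (c₅ := c₅) (c₆ := c₆) hΔ hΩ hΩden
  have hVΩ : MapsTo (symMapInv c₁ c₂ c₃ c₄ c₅ c₆) (symMap c₁ c₂ c₃ c₄ c₅ c₆ '' Ω) Ω := by
    rw [image_symMap hΔ hΩden]; exact fun _ hq => hq.2
  have hE : c₁ - c₃ * q.1 ≠ 0 := by rw [image_symMap hΔ hΩden] at hq; exact hq.1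
  rw [d2_d2_eq_of_eqOn_comp_symMapInv hΩ hV hVΩ (contDiffOn_symPullback hΔ hW0 hW1 hΩden hw) hv hq,
    d2_d2_symPullback hΩ hw (hVΩ hq), mul_symMapInv_fst_add hE, burgersTransform]
  simp only [symMapInv]
  field_simp
  ring

end Pullback

/-- The verification part of the theorem on the point-symmetry pseudogroup
of the reduced equation: the transformation `Φ` is injective on `Ω`, `Φ(Ω)` is open, and the
transformed function `v` is a smooth solution of the reduced equation on `Φ(Ω)`. -/
theorem statement3 (c₁ c₂ c₃ c₄ c₅ c₆ : ℝ) (hΔ : c₁ * c₄ - c₂ * c₃ ≠ 0)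
    (W0 W1 : ℝ → ℝ) (hW0 : ContDiff ℝ (⊤ : ℕ∞) W0) (hW1 : ContDiff ℝ (⊤ : ℕ∞) W1)
    (Ω : Set (ℝ × ℝ)) (hΩ : IsOpen Ω) (hΩden : ∀ p ∈ Ω, c₃ * p.1 + c₄ ≠ 0)
    (w : ℝ × ℝ → ℝ) (hw : ContDiffOn ℝ (⊤ : ℕ∞) w Ω)
    (hweq : ∀ p ∈ Ω, d1 (d2 (d2 w)) p + d2 (d2 w) p * d2 (d2 (d2 w)) p = 0)
    (Φ : ℝ × ℝ → ℝ × ℝ)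
    (hΦ : ∀ p : ℝ × ℝ, Φ p = ((c₁ * p.1 + c₂) / (c₃ * p.1 + c₄),
      (p.2 + c₅ * p.1 + c₆) / (c₃ * p.1 + c₄))) :
    Set.InjOn Φ Ω ∧ IsOpen (Φ '' Ω) ∧
      ∀ v : ℝ × ℝ → ℝ,
        (∀ p ∈ Ω, v (Φ p) =
          w p / ((c₁ * c₄ - c₂ * c₃) * (c₃ * p.1 + c₄))
            - c₃ / ((c₁ * c₄ - c₂ * c₃) * (c₃ * p.1 + c₄) ^ 2) * (p.2 ^ 3 / 6)
            - (c₃ * c₆ - c₄ * c₅) / ((c₁ * c₄ - c₂ * c₃) * (c₃ * p.1 + c₄) ^ 2) * (p.2 ^ 2 / 2)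
            + W1 p.1 * p.2 + W0 p.1) →
        ContDiffOn ℝ (⊤ : ℕ∞) v (Φ '' Ω) ∧
          ∀ q ∈ Φ '' Ω, d1 (d2 (d2 v)) q + d2 (d2 v) q * d2 (d2 (d2 v)) q = 0 := by
  obtain rfl : Φ = symMap c₁ c₂ c₃ c₄ c₅ c₆ := funext hΦ
  have hleft : LeftInvOn (symMapInv c₁ c₂ c₃ c₄ c₅ c₆) (symMap c₁ c₂ c₃ c₄ c₅ c₆) Ω :=
    fun p hp => symMapInv_symMap hΔ (hΩden p hp)
  have hV := isOpen_image_symMap (c₅ := c₅) (c₆ := c₆) hΔ hΩ hΩden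
  refine ⟨hleft.injOn, hV, fun v hv => ?_⟩
  have hvψ : EqOn v (symPullback c₁ c₂ c₃ c₄ c₅ c₆ W0 W1 w ∘ symMapInv c₁ c₂ c₃ c₄ c₅ c₆)
      (symMap c₁ c₂ c₃ c₄ c₅ c₆ '' Ω) := by
    rintro _ ⟨p, hp, rfl⟩
    rw [Function.comp_apply, hleft hp, hv p hp, symPullback]
  have hsmooth : ContDiffOn ℝ (⊤ : ℕ∞) v (symMap c₁ c₂ c₃ c₄ c₅ c₆ '' Ω) := by
    refine ContDiffOn.congr ?_ hvψ
    rw [image_symMap hΔ hΩden]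
    exact (contDiffOn_symPullback hΔ hW0 hW1 hΩden hw).comp
      (contDiffOn_symMapInv.mono inter_subset_left) fun _ hq => hq.2
  have hh := ((hw.d2 hΩ).d2 hΩ).differentiableOn (by simp)
  exact IsRedSolOn.of_eqOn_d2_d2 hV hsmooth
    (d1_add_mul_d2_burgersTransform_eq_zero hΔ hΩ hΩden hh hweq)
    (eqOn_d2_d2_burgersTransform hΔ hW0 hW1 hΩ hΩden hw hvψ)
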